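/- arXiv:2003.10161 — 6 statements merged into one kernel-verified Lean document; each statement's English description precedes it below -/
import Mathlib

section
/- For any positive integer q and integers a, b, the average over r in [q] of e((a r^2 + b r)/q) has absolute value at most C · gcd(a,q)^{1/2} · q^{-1/2} for some absolute constant C. -/
/-!
Weyl differencing: for `S = ∑_{x mod q} e((a x² + b x)/q)`, substituting `x = y + h` gives
`|S|² = ∑_h e((a h² + b h)/q) ∑_y e(2 a h y / q) = q ∑_{2 a h ≡ 0} e((a h² + b h)/q)`,
so `|S|² ≤ q · #{h mod q : 2 a h ≡ 0} ≤ q · gcd(2a, q) ≤ 2 q · gcd(a, q)`,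
and `C = √2` works.
-/

open Finset

theorem Int.gcd_mul_left_dvd_natAbs_mul_gcd (m a b : ℤ) :
    Int.gcd (m * a) b ∣ m.natAbs * Int.gcd a b :=
  Int.gcd_mul_left m a b ▸ Int.gcd_dvd_gcd_mul_left_right (m * a) b m

theorem ZMod.sum_Icc_one_natCast {q : ℕ} [NeZero q] {M : Type*} [AddCommMonoid M]
    (f : ZMod q → M) : ∑ r ∈ Icc 1 q, f r = ∑ x, f x := by
  refine sum_nbij' (↑) (fun x => if x = 0 then q else x.val) (by simp) ?_ ?_ ?_ fun _ _ => rfl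
  · intro x _
    split_ifs with hx
    · exact mem_Icc.2 ⟨NeZero.one_le, le_rfl⟩
    · exact mem_Icc.2 ⟨Nat.one_le_iff_ne_zero.2 ((ZMod.val_ne_zero x).2 hx), x.val_le⟩
  · intro r hr
    obtain ⟨hr1, hrq⟩ := mem_Icc.1 hr
    split_ifs with hr0
    · exact le_antisymm (Nat.le_of_dvd hr1 ((ZMod.natCast_eq_zero_iff r q).1 hr0)) hrq
    · refine ZMod.val_cast_of_lt (lt_of_le_of_ne hrq ?_)
      rintro rfl
      exact hr0 (ZMod.natCast_self r)
  · intro x _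
    split_ifs with hx
    · rw [ZMod.natCast_self, hx]
    · exact ZMod.natCast_zmod_val x

theorem ZMod.card_filter_mul_intCast_eq_zero_le (q : ℕ) [NeZero q] (c : ℤ) :
    #{h : ZMod q | h * c = 0} ≤ Int.gcd c q := by
  have hpos : 0 < Int.gcd c q := Int.gcd_pos_of_ne_zero_right _ (by exact_mod_cast NeZero.ne q)
  refine le_trans (card_le_card fun h hh => ?_) (IsAddCyclic.card_nsmul_eq_zero_le hpos)
  simp only [mem_filter, mem_univ, true_and] at hh ⊢
  have hbezout : ((Int.gcd c q : ℤ) : ZMod q) = c * c.gcdA q := by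
    simp [Int.gcd_eq_gcd_ab]
  rw [nsmul_eq_mul, ← Int.cast_natCast, hbezout]
  linear_combination (c.gcdA q : ZMod q) * hh

namespace AddChar

variable {R : Type*} [CommRing R] [Fintype R] [DecidableEq R]

theorem sum_quadratic_mul_conj (ψ : AddChar R ℂ) (hψ : ψ.IsPrimitive) (a b : R) :
    (∑ x, ψ (a * x ^ 2 + b * x)) * starRingEnd ℂ (∑ x, ψ (a * x ^ 2 + b * x)) =
      Fintype.card R * ∑ h with h * (2 * a) = 0, ψ (a * h ^ 2 + b * h) := by
  have hdiff (y h : R) : a * (y + h) ^ 2 + b * (y + h) + -(a * y ^ 2 + b * y) =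
      (a * h ^ 2 + b * h) + y * (h * (2 * a)) := by ring
  calc _ = ∑ y, ∑ h,
        ψ (a * (y + h) ^ 2 + b * (y + h)) * starRingEnd ℂ (ψ (a * y ^ 2 + b * y)) := by
        rw [map_sum, sum_mul_sum, sum_comm]
        exact sum_congr rfl fun y _ => (Fintype.sum_equiv (Equiv.addLeft y) _ _ fun _ => rfl).symm
    _ = ∑ h, ψ (a * h ^ 2 + b * h) * ∑ y, ψ (y * (h * (2 * a))) := by
        simp_rw [← map_neg_eq_conj, ← map_add_eq_mul, hdiff, map_add_eq_mul, mul_sum]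
        exact sum_comm
    _ = _ := by
        simp_rw [fun c => sum_mulShift (ψ := ψ) c hψ]
        rw [mul_sum, sum_filter]
        refine sum_congr rfl fun h _ => ?_
        split_ifs <;> simp [mul_comm]

theorem norm_sum_quadratic_sq_le (ψ : AddChar R ℂ) (hψ : ψ.IsPrimitive) (a b : R) :
    ‖∑ x, ψ (a * x ^ 2 + b * x)‖ ^ 2 ≤ Fintype.card R * #{h | h * (2 * a) = 0} := by
  have hsq := congrArg norm (sum_quadratic_mul_conj ψ hψ a b)
  rw [RCLike.mul_conj, norm_mul, Complex.norm_natCast] at hsq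
  norm_cast at hsq
  rw [abs_of_nonneg (by positivity)] at hsq
  rw [hsq]
  gcongr
  exact (norm_sum_le _ _).trans (by simp [norm_apply])

end AddChar

/-- Gauss-sum estimate: the average over `r ∈ [q]` of `e((a r² + b r)/q)` is
`O(gcd(a,q)^{1/2} q^{-1/2})` with an absolute constant. -/
theorem gauss_sum_average_bound :
    ∃ C : ℝ, 0 < C ∧ ∀ (q : ℕ), 0 < q → ∀ a b : ℤ,
      ‖(1 / (q : ℂ)) * ∑ r ∈ Finset.Icc 1 q,
          Complex.exp (2 * Real.pi * Complex.I *
            (((a * (r : ℤ) ^ 2 + b * (r : ℤ) : ℤ) : ℝ) / (q : ℝ)))‖ ≤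
        C * Real.sqrt (Int.gcd a (q : ℤ)) / Real.sqrt q := by
  refine ⟨Real.sqrt 2, by positivity, fun q hq a b => ?_⟩
  have : NeZero q := ⟨hq.ne'⟩
  set S := ∑ x : ZMod q, ZMod.stdAddChar ((a : ZMod q) * x ^ 2 + (b : ZMod q) * x) with hS_def
  have hsum : ∑ r ∈ Icc 1 q, Complex.exp (2 * Real.pi * Complex.I *
      (((a * (r : ℤ) ^ 2 + b * (r : ℤ) : ℤ) : ℝ) / (q : ℝ))) = S := by
    rw [hS_def, ← ZMod.sum_Icc_one_natCast]
    refine sum_congr rfl fun r _ => ?_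
    have := ZMod.stdAddChar_coe (N := q) (a * (r : ℤ) ^ 2 + b * (r : ℤ))
    push_cast at this ⊢
    rw [this, mul_div_assoc]
  have hcount : #{h : ZMod q | h * (2 * a) = 0} ≤ 2 * Int.gcd a q := by
    have hcard := ZMod.card_filter_mul_intCast_eq_zero_le q (2 * a)
    push_cast at hcard
    exact hcard.trans <| Nat.le_of_dvd (by positivity) (Int.gcd_mul_left_dvd_natAbs_mul_gcd 2 a q)
  have hS : ‖S‖ ^ 2 ≤ q * (2 * Int.gcd a q) := by
    have := AddChar.norm_sum_quadratic_sq_le _ (ZMod.isPrimitive_stdAddChar q) (a : ZMod q) b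
    rw [ZMod.card] at this
    exact this.trans (by gcongr; exact_mod_cast hcount)
  have hq' : (0 : ℝ) < q := by exact_mod_cast hq
  calc ‖(1 / (q : ℂ)) * _‖ = ‖S‖ / q := by
        rw [hsum, norm_mul, norm_div, norm_one, Complex.norm_natCast, one_div_mul_eq_div]
    _ ≤ √(q * (2 * Int.gcd a q)) / q := by gcongr; exact Real.le_sqrt_of_sq_le hS
    _ = √2 * √(Int.gcd a q) / √q := by
        rw [Real.sqrt_mul hq'.le, Real.sqrt_mul zero_le_two]
        field_simp
        rw [Real.sq_sqrt hq'.le]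
end

section
/- Let Q ≥ 1 be a real number and define d(n, Q) = #{q : 1 ≤ q ≤ Q, q | n} for integers n. Then for any integer B ≥ 1, any ε > 0, and any real X ≥ 1, we have Σ_{|n| ≤ X} d(n, Q)^B ≪_{ε,B} Q^B + Q^ε X. -/
/-!
Expanding `d(n, Q) ^ B` as a count of `B`-tuples `t` of integers in `[1, Q]` dividing `n` turns the
moment into `∑_t #{|n| ≤ X : lcm t ∣ n} ≤ ∑_t (2X / lcm t + 1)`. The `+ 1` terms contribute at most
`Q ^ B`. A tuple with `lcm t = L` consists of divisors of `L`, so `∑_t 1 / lcm t` is at most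
`∑_{L ≤ Q^B} τ(L)^B / L`. Since `τ(ab) ≤ τ(a) τ(b)`, writing `τ(L) = ∑_{ab = L} 1` gives
`∑_{L ≤ N} τ(L)^(k+1) / L ≤ (∑_{L ≤ N} τ(L)^k / L)^2`, and iterating from the harmonic sum yields
`(1 + log N)^(2^B)`, which is `≪_{ε,B} Q^ε` for `N = Q^B`.
-/

/-- `d(n, Q)` is the number of positive integers `q ≤ Q` dividing `n`. -/
noncomputable def restrictedDivisorCount (n : ℤ) (Q : ℝ) : ℕ :=
  ((Finset.Icc 1 ⌊Q⌋₊).filter (fun q : ℕ => (q : ℤ) ∣ n)).card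

open Finset Real

namespace Nat

lemma card_divisors_mul_le (m n : ℕ) : #(m * n).divisors ≤ #m.divisors * #n.divisors := by
  rw [divisors_mul]
  exact card_mul_le

lemma card_divisorsAntidiagonal (n : ℕ) : #n.divisorsAntidiagonal = #n.divisors := by
  rw [← map_div_right_divisors, card_map]

end Nat

lemma sum_Icc_sum_divisorsAntidiagonal_le {f : ℕ × ℕ → ℝ} (hf : ∀ p, 0 ≤ f p) (N : ℕ) :
    ∑ L ∈ Icc 1 N, ∑ p ∈ L.divisorsAntidiagonal, f p ≤ ∑ p ∈ Icc 1 N ×ˢ Icc 1 N, f p := by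
  have hdisj : (Icc 1 N : Set ℕ).PairwiseDisjoint Nat.divisorsAntidiagonal := by
    intro a _ b _ hab
    refine disjoint_left.mpr fun p hpa hpb => hab ?_
    rw [Nat.mem_divisorsAntidiagonal] at hpa hpb
    exact hpa.1.symm.trans hpb.1
  rw [← sum_biUnion hdisj]
  refine sum_le_sum_of_subset_of_nonneg (fun p hp => ?_) fun p _ _ => hf p
  obtain ⟨L, hL, hpL⟩ := mem_biUnion.mp hp
  have h1 := Nat.fst_mem_divisors_of_mem_antidiagonal hpL
  have h2 := Nat.snd_mem_divisors_of_mem_antidiagonal hpL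
  have hLN := (mem_Icc.mp hL).2
  simp only [mem_product, mem_Icc]
  exact ⟨⟨Nat.pos_of_mem_divisors h1, (Nat.divisor_le h1).trans hLN⟩,
    ⟨Nat.pos_of_mem_divisors h2, (Nat.divisor_le h2).trans hLN⟩⟩

lemma sum_Icc_card_divisors_pow_succ_div_le_sq (N k : ℕ) :
    ∑ L ∈ Icc 1 N, (#L.divisors : ℝ) ^ (k + 1) / L ≤
      (∑ L ∈ Icc 1 N, (#L.divisors : ℝ) ^ k / L) ^ 2 := by
  rw [sq, sum_mul_sum, ← sum_product']
  refine le_trans (sum_le_sum fun L _ => ?_)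
    (sum_Icc_sum_divisorsAntidiagonal_le (fun p => by positivity) N)
  have hsplit : (#L.divisors : ℝ) ^ (k + 1) / L =
      ∑ _p ∈ L.divisorsAntidiagonal, (#L.divisors : ℝ) ^ k / L := by
    rw [sum_const, Nat.card_divisorsAntidiagonal, nsmul_eq_mul, pow_succ]
    ring
  rw [hsplit]
  refine sum_le_sum fun p hp => ?_
  obtain ⟨rfl, -⟩ := Nat.mem_divisorsAntidiagonal.mp hp
  have hτ : (#(p.1 * p.2).divisors : ℝ) ≤ #p.1.divisors * #p.2.divisors := by
    exact_mod_cast Nat.card_divisors_mul_le p.1 p.2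
  rw [div_mul_div_comm, ← mul_pow, Nat.cast_mul]
  gcongr

lemma sum_Icc_card_divisors_pow_div_le (N k : ℕ) :
    ∑ L ∈ Icc 1 N, (#L.divisors : ℝ) ^ k / L ≤ (1 + log N) ^ 2 ^ k := by
  induction k with
  | zero =>
    have h := harmonic_le_one_add_log N
    rw [harmonic_eq_sum_Icc] at h
    simpa [one_div] using h
  | succ k ih =>
    calc ∑ L ∈ Icc 1 N, (#L.divisors : ℝ) ^ (k + 1) / L
        ≤ (∑ L ∈ Icc 1 N, (#L.divisors : ℝ) ^ k / L) ^ 2 :=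
          sum_Icc_card_divisors_pow_succ_div_le_sq N k
      _ ≤ ((1 + log N) ^ 2 ^ k) ^ 2 := by gcongr
      _ = (1 + log N) ^ 2 ^ (k + 1) := by rw [← pow_mul, pow_succ]

lemma sum_card_filter_pow_eq_sum_piFinset {α β : Type*} (s : Finset α) (D : Finset β)
    (r : β → α → Prop) [∀ b a, Decidable (r b a)] (B : ℕ) :
    ∑ n ∈ s, #{q ∈ D | r q n} ^ B =
      ∑ t ∈ Fintype.piFinset (fun _ : Fin B => D), #{n ∈ s | ∀ i, r (t i) n} := by
  have hpow : ∀ n, #{q ∈ D | r q n} ^ B =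
      #{t ∈ Fintype.piFinset (fun _ : Fin B => D) | ∀ i, r (t i) n} := fun n => by
    rw [← Fintype.card_piFinset_const]
    congr 1
    ext t
    simp [Fintype.mem_piFinset, forall_and]
  simp_rw [hpow, card_filter]
  exact sum_comm

lemma sum_restrictedDivisorCount_pow_eq (s : Finset ℤ) (Q : ℝ) (B : ℕ) :
    ∑ n ∈ s, restrictedDivisorCount n Q ^ B =
      ∑ t ∈ Fintype.piFinset (fun _ : Fin B => Icc 1 ⌊Q⌋₊),
        #{n ∈ s | ((univ.lcm t : ℕ) : ℤ) ∣ n} := by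
  simp only [restrictedDivisorCount]
  rw [sum_card_filter_pow_eq_sum_piFinset]
  refine sum_congr rfl fun t _ => congrArg card (filter_congr fun n _ => ?_)
  simp [Int.natCast_dvd, Finset.lcm_dvd_iff]

lemma lcm_mem_Icc_of_mem_piFinset {q B : ℕ} {t : Fin B → ℕ}
    (ht : t ∈ Fintype.piFinset (fun _ : Fin B => Icc 1 q)) : univ.lcm t ∈ Icc 1 (q ^ B) := by
  simp only [Fintype.mem_piFinset, mem_Icc] at ht
  have hprod : 0 < ∏ i, t i := prod_pos fun i _ => (ht i).1
  refine mem_Icc.mpr ⟨Nat.pos_of_dvd_of_pos (lcm_dvd_prod univ t) hprod, ?_⟩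
  calc univ.lcm t ≤ ∏ i, t i := Nat.le_of_dvd hprod (lcm_dvd_prod univ t)
    _ ≤ ∏ _i : Fin B, q := prod_le_prod' fun i _ => (ht i).2
    _ = q ^ B := by simp

lemma card_filter_lcm_eq_le {ι : Type*} [Fintype ι] [DecidableEq ι] (s : Finset (ι → ℕ)) {L : ℕ}
    (hL : L ≠ 0) : #{t ∈ s | (univ : Finset ι).lcm t = L} ≤ #L.divisors ^ Fintype.card ι := by
  rw [← card_univ, ← prod_const, ← Fintype.card_piFinset]
  refine card_le_card fun t ht => Fintype.mem_piFinset.mpr fun i => ?_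
  obtain ⟨-, rfl⟩ := mem_filter.mp ht
  exact Nat.mem_divisors.mpr ⟨dvd_lcm (mem_univ i), hL⟩

lemma sum_piFinset_inv_lcm_le (q B : ℕ) :
    ∑ t ∈ Fintype.piFinset (fun _ : Fin B => Icc 1 q), (1 : ℝ) / univ.lcm t ≤
      ∑ L ∈ Icc 1 (q ^ B), (#L.divisors : ℝ) ^ B / L := by
  rw [← sum_fiberwise_of_maps_to (g := fun t : Fin B → ℕ => univ.lcm t)
    fun t ht => lcm_mem_Icc_of_mem_piFinset ht]
  refine sum_le_sum fun L hL => ?_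
  have hL0 : L ≠ 0 := Nat.one_le_iff_ne_zero.mp (mem_Icc.mp hL).1
  have hcard := card_filter_lcm_eq_le (Fintype.piFinset fun _ : Fin B => Icc 1 q) hL0
  rw [Fintype.card_fin] at hcard
  calc ∑ t ∈ Fintype.piFinset (fun _ : Fin B => Icc 1 q) with univ.lcm t = L,
        (1 : ℝ) / univ.lcm t
      = #{t ∈ Fintype.piFinset (fun _ : Fin B => Icc 1 q) | univ.lcm t = L} / L := by
        rw [sum_congr rfl fun t ht => by rw [(mem_filter.mp ht).2], sum_const, nsmul_eq_mul,
          mul_one_div]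
    _ ≤ (#L.divisors : ℝ) ^ B / L := by gcongr; exact_mod_cast hcard

lemma card_filter_dvd_Icc_neg_le {M L : ℤ} (hM : 0 ≤ M) (hL : 0 < L) :
    (#{n ∈ Icc (-M) M | L ∣ n} : ℤ) ≤ 2 * (M / L) + 1 := by
  have hinj : #{n ∈ Icc (-M) M | L ∣ n} ≤ #(Icc (-(M / L)) (M / L)) := by
    refine card_le_card_of_injOn (· / L) (fun n hn => ?_) fun a ha b hb hab => ?_
    · obtain ⟨hn, k, rfl⟩ := mem_filter.mp hn
      rw [mem_Icc] at hn
      simp only [coe_Icc, Set.mem_Icc, Int.mul_ediv_cancel_left _ hL.ne']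
      constructor
      · rw [neg_le]
        exact Int.le_ediv_of_mul_le hL (by linarith)
      · exact Int.le_ediv_of_mul_le hL (by linarith)
    · simp only [coe_filter, Set.mem_ofPred_eq] at ha hb
      rw [← Int.ediv_mul_cancel ha.2, ← Int.ediv_mul_cancel hb.2]
      exact congrArg (· * L) hab
  have hq : 0 ≤ M / L := Int.ediv_nonneg hM hL.le
  rw [Int.card_Icc] at hinj
  omega

lemma card_filter_dvd_Icc_floor_le {X : ℝ} (hX : 0 ≤ X) {L : ℕ} (hL : 0 < L) :
    (#{n ∈ Icc (-⌊X⌋) ⌊X⌋ | (L : ℤ) ∣ n} : ℝ) ≤ 2 * X / L + 1 := by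
  have hLR : (0 : ℝ) < L := by exact_mod_cast hL
  have hcount := card_filter_dvd_Icc_neg_le (Int.floor_nonneg.mpr hX) (Int.natCast_pos.mpr hL)
  have hquot : ((⌊X⌋ / (L : ℤ) : ℤ) : ℝ) ≤ X / L := by
    rw [le_div_iff₀ hLR]
    calc ((⌊X⌋ / (L : ℤ) : ℤ) : ℝ) * L = ((⌊X⌋ / (L : ℤ) * L : ℤ) : ℝ) := by push_cast; rfl
      _ ≤ ⌊X⌋ := by exact_mod_cast Int.ediv_mul_le _ (by positivity)
      _ ≤ X := Int.floor_le X
  have hcountR : (#{n ∈ Icc (-⌊X⌋) ⌊X⌋ | (L : ℤ) ∣ n} : ℝ) ≤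
      2 * ((⌊X⌋ / (L : ℤ) : ℤ) : ℝ) + 1 := by
    exact_mod_cast hcount
  linarith [mul_div_assoc 2 X (L : ℝ)]

lemma one_add_log_pow_le {x ε : ℝ} (hx : 1 ≤ x) (hε : 0 < ε) {k : ℕ} (hk : k ≠ 0) :
    (1 + log x) ^ k ≤ (1 + k / ε) ^ k * x ^ ε := by
  have hkR : (0 : ℝ) < k := by exact_mod_cast Nat.pos_of_ne_zero hk
  have hδ : 0 < ε / k := div_pos hε hkR
  have hlog : log x ≤ k / ε * x ^ (ε / k) := by
    calc log x ≤ x ^ (ε / k) / (ε / k) := log_le_rpow_div (by linarith) hδ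
      _ = k / ε * x ^ (ε / k) := by field_simp
  have hone : 1 ≤ x ^ (ε / k) := one_le_rpow hx hδ.le
  have hbase : 1 + log x ≤ (1 + k / ε) * x ^ (ε / k) := by
    have : 0 ≤ (k : ℝ) / ε := by positivity
    nlinarith
  calc (1 + log x) ^ k ≤ ((1 + k / ε) * x ^ (ε / k)) ^ k := by
        gcongr
        linarith [log_nonneg hx]
    _ = (1 + k / ε) ^ k * x ^ ε := by
        rw [mul_pow, ← rpow_natCast (x ^ (ε / k)), ← rpow_mul (by linarith),
          div_mul_cancel₀ ε hkR.ne']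

lemma one_add_log_pow_pow_le {x y ε : ℝ} (hy : 1 ≤ y) (hyx : y ≤ x) (hε : 0 < ε) {B k : ℕ}
    (hB : 1 ≤ B) (hk : k ≠ 0) :
    (1 + log (y ^ B)) ^ k ≤ (B * (1 + k / ε)) ^ k * x ^ ε := by
  have hBR : (1 : ℝ) ≤ B := by exact_mod_cast hB
  have hlog : 1 + log (y ^ B) ≤ B * (1 + log x) := by
    rw [log_pow]
    nlinarith [log_le_log (by linarith) hyx, log_nonneg hy]
  calc (1 + log (y ^ B)) ^ k ≤ (B * (1 + log x)) ^ k :=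
        pow_le_pow_left₀ (by linarith [log_nonneg (one_le_pow₀ hy : 1 ≤ y ^ B)]) hlog k
    _ = B ^ k * (1 + log x) ^ k := mul_pow _ _ _
    _ ≤ B ^ k * ((1 + k / ε) ^ k * x ^ ε) := by
        gcongr
        exact one_add_log_pow_le (hy.trans hyx) hε hk
    _ = (B * (1 + k / ε)) ^ k * x ^ ε := by rw [mul_pow]; ring

/-- Bourgain's divisor moment bound: `∑_{|n| ≤ X} d(n,Q)^B ≪_{ε,B} Q^B + Q^ε X`. -/
theorem divisor_moment_bound :
    ∀ B : ℕ, 1 ≤ B → ∀ ε : ℝ, 0 < ε → ∃ C : ℝ, 0 < C ∧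
      ∀ Q X : ℝ, 1 ≤ Q → 1 ≤ X →
        (∑ n ∈ Finset.Icc (-⌊X⌋) ⌊X⌋, ((restrictedDivisorCount n Q : ℝ)) ^ B) ≤
          C * (Q ^ B + Q ^ ε * X) := by
  intro B hB ε hε
  set C₁ : ℝ := (B * (1 + 2 ^ B / ε)) ^ 2 ^ B
  refine ⟨1 + 2 * C₁, by positivity, fun Q X hQ hX => ?_⟩
  set q := ⌊Q⌋₊
  set T := Fintype.piFinset fun _ : Fin B => Icc 1 q
  have hq : (1 : ℝ) ≤ q := by exact_mod_cast Nat.le_floor (by exact_mod_cast hQ)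
  have hqQ : (q : ℝ) ≤ Q := Nat.floor_le (by linarith)
  have hlcm : ∑ t ∈ T, (1 : ℝ) / univ.lcm t ≤ C₁ * Q ^ ε := by
    refine (sum_piFinset_inv_lcm_le q B).trans ((sum_Icc_card_divisors_pow_div_le _ B).trans ?_)
    have hlog := one_add_log_pow_pow_le hq hqQ hε hB (k := 2 ^ B) (by positivity)
    push_cast at hlog ⊢
    exact hlog
  have hT : (#T : ℝ) ≤ Q ^ B := by
    rw [Fintype.card_piFinset_const, Nat.card_Icc, Nat.add_sub_cancel]
    push_cast
    gcongr
  calc ∑ n ∈ Icc (-⌊X⌋) ⌊X⌋, (restrictedDivisorCount n Q : ℝ) ^ B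
      = ∑ t ∈ T, (#{n ∈ Icc (-⌊X⌋) ⌊X⌋ | ((univ.lcm t : ℕ) : ℤ) ∣ n} : ℝ) := by
        exact_mod_cast sum_restrictedDivisorCount_pow_eq _ Q B
    _ ≤ ∑ t ∈ T, (2 * X / univ.lcm t + 1) := sum_le_sum fun t ht =>
        card_filter_dvd_Icc_floor_le (by linarith) (mem_Icc.mp (lcm_mem_Icc_of_mem_piFinset ht)).1
    _ = 2 * X * ∑ t ∈ T, (1 : ℝ) / univ.lcm t + #T := by
        rw [sum_add_distrib, mul_sum, sum_const, nsmul_one]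
        simp only [mul_one_div]
    _ ≤ 2 * X * (C₁ * Q ^ ε) + Q ^ B := by gcongr
    _ ≤ (1 + 2 * C₁) * (Q ^ B + Q ^ ε * X) := by
        have hQε : 0 ≤ Q ^ ε * X := by positivity
        have hC₁ : 0 ≤ C₁ * Q ^ B := by positivity
        nlinarith
end

section
/- Let a₁, a₂, b₁, b₂ be nonzero integers and η ∈ (0,1). For any functions f : (ηN, N] ∩ ℤ → [−1,1] and g : [N] → [−1,1], we have ∫_𝕋 |f̃(a₁α) f̃(a₂α) ĝ(b₁α) ĝ(b₂α)| dα ≪_{b₁,b₂} η^{−1} N², where f̃(α) = Σ_x f(x) e(αx²) and ĝ(α) = Σ_x g(x) e(αx). -/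
/-!
By AM-GM, `|f̃(a₁α) f̃(a₂α) ĝ(b₁α) ĝ(b₂α)| ≤ (|f̃(a₁α) ĝ(b₁α)|² + |f̃(a₂α) ĝ(b₂α)|²) / 2`,
so it suffices to bound each `∫_𝕋 |f̃(aα) ĝ(bα)|²`. By orthogonality this integral is at most
the number of solutions of `a x₁² + b y₁ = a x₂² + b y₂` with `x_i ∈ (ηN, N]`, `y_i ∈ [1, N]`.
For such a solution `|a| |x₁ - x₂| (x₁ + x₂) = |b| |y₁ - y₂| ≤ |b| N` and `x₁ + x₂ > 2ηN`, so
`|x₁ - x₂| ≤ |b| / (2η)`; the triple `(x₁, x₁ - x₂, y₁)` then determines the solution, which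
gives at most `N · (|b| / η + 1) · N` of them.
-/

open Complex Real Finset ComplexConjugate

noncomputable def expTwoPiI (t : ℝ) : ℂ := Complex.exp (2 * π * I * t)

lemma expTwoPiI_add (s t : ℝ) : expTwoPiI (s + t) = expTwoPiI s * expTwoPiI t := by
  simp only [expTwoPiI, ofReal_add, mul_add, Complex.exp_add]

lemma conj_expTwoPiI (t : ℝ) : conj (expTwoPiI t) = expTwoPiI (-t) := by
  simp only [expTwoPiI, ← Complex.exp_conj, map_mul, conj_ofReal, conj_I, map_ofNat, ofReal_neg]
  ring_nf

@[fun_prop]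
lemma continuous_expTwoPiI : Continuous expTwoPiI := by
  unfold expTwoPiI; fun_prop

lemma integral_expTwoPiI_intCast_mul (m : ℤ) :
    ∫ α in (0 : ℝ)..1, expTwoPiI (m * α) = if m = 0 then 1 else 0 := by
  split_ifs with hm
  · simp [hm, expTwoPiI]
  have hc : 2 * π * I * m ≠ 0 := by simp [Real.pi_ne_zero, I_ne_zero, hm]
  have hexp : ∀ α : ℝ, expTwoPiI (m * α) = Complex.exp (2 * π * I * m * α) := by
    intro α; simp only [expTwoPiI]; push_cast; ring_nf
  simp_rw [hexp]
  rw [integral_exp_mul_complex hc, ofReal_one, mul_one, ofReal_zero, mul_zero, Complex.exp_zero]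
  have hperiod : Complex.exp (2 * π * I * m) = 1 := by
    rw [← Complex.exp_int_mul_two_pi_mul_I m]; ring_nf
  rw [hperiod, sub_self, zero_div]

section ExpSum

variable {ι κ : Type*}

noncomputable def expSum (s : Finset ι) (c : ι → ℝ) (n : ι → ℤ) (α : ℝ) : ℂ :=
  ∑ i ∈ s, (c i : ℂ) * expTwoPiI (n i * α)

def collisions (s : Finset ι) (n : ι → ℤ) : Finset (ι × ι) :=
  (s ×ˢ s).filter fun p => n p.1 = n p.2

@[fun_prop]
lemma continuous_expSum (s : Finset ι) (c : ι → ℝ) (n : ι → ℤ) : Continuous (expSum s c n) := by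
  unfold expSum; fun_prop

lemma expSum_mul_expSum (s : Finset ι) (t : Finset κ) (c : ι → ℝ) (d : κ → ℝ)
    (n : ι → ℤ) (m : κ → ℤ) (α : ℝ) :
    expSum s c n α * expSum t d m α =
      expSum (s ×ˢ t) (fun p => c p.1 * d p.2) (fun p => n p.1 + m p.2) α := by
  rw [expSum, expSum, expSum, sum_mul_sum, sum_product]
  refine sum_congr rfl fun i _ => sum_congr rfl fun j _ => ?_
  rw [Int.cast_add, add_mul, expTwoPiI_add, ofReal_mul]
  ring

lemma ofReal_norm_expSum_sq (s : Finset ι) (c : ι → ℝ) (n : ι → ℤ) (α : ℝ) :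
    ((‖expSum s c n α‖ ^ 2 : ℝ) : ℂ) =
      ∑ p ∈ s ×ˢ s, ((c p.1 * c p.2 : ℝ) : ℂ) * expTwoPiI ((n p.1 - n p.2 : ℤ) * α) := by
  have hconj : conj (expSum s c n α) = expSum s c (fun i => -n i) α := by
    simp only [expSum, map_sum, map_mul, conj_ofReal, conj_expTwoPiI, Int.cast_neg, neg_mul]
  rw [ofReal_pow, ← mul_conj', hconj, expSum_mul_expSum, expSum]
  simp only [sub_eq_add_neg]

lemma integral_norm_expSum_sq (s : Finset ι) (c : ι → ℝ) (n : ι → ℤ) :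
    ∫ α in (0 : ℝ)..1, ‖expSum s c n α‖ ^ 2 = ∑ p ∈ collisions s n, c p.1 * c p.2 := by
  apply ofReal_injective
  rw [← intervalIntegral.integral_ofReal]
  simp_rw [ofReal_norm_expSum_sq]
  rw [intervalIntegral.integral_finsetSum fun p _ => by
    exact (by fun_prop : Continuous _).intervalIntegrable _ _]
  simp_rw [intervalIntegral.integral_const_mul, integral_expTwoPiI_intCast_mul, sub_eq_zero,
    mul_ite, mul_one, mul_zero, ← sum_filter, collisions]
  push_cast; rfl

lemma integral_norm_expSum_sq_le_card_collisions (s : Finset ι) {c : ι → ℝ} (n : ι → ℤ)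
    (hc : ∀ i, |c i| ≤ 1) :
    ∫ α in (0 : ℝ)..1, ‖expSum s c n α‖ ^ 2 ≤ #(collisions s n) := by
  rw [integral_norm_expSum_sq, card_eq_sum_ones, Nat.cast_sum, Nat.cast_one]
  refine sum_le_sum fun p _ => ?_
  calc c p.1 * c p.2 ≤ |c p.1 * c p.2| := le_abs_self _
    _ = |c p.1| * |c p.2| := abs_mul _ _
    _ ≤ 1 := mul_le_one₀ (hc _) (abs_nonneg _) (hc _)

end ExpSum

lemma integral_norm_mul_le_of_continuous {u v : ℝ → ℂ} (hu : Continuous u) (hv : Continuous v)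
    {a b : ℝ} (hab : a ≤ b) :
    ∫ α in a..b, ‖u α * v α‖ ≤ ((∫ α in a..b, ‖u α‖ ^ 2) + ∫ α in a..b, ‖v α‖ ^ 2) / 2 := by
  have hamgm : ∀ α, ‖u α * v α‖ ≤ (‖u α‖ ^ 2 + ‖v α‖ ^ 2) / 2 := fun α => by
    rw [norm_mul]; nlinarith [two_mul_le_add_sq ‖u α‖ ‖v α‖]
  have hint : ∀ {w : ℝ → ℝ}, Continuous w → IntervalIntegrable w MeasureTheory.volume a b :=
    fun hw => hw.intervalIntegrable _ _
  rw [← intervalIntegral.integral_add (hint (by fun_prop)) (hint (by fun_prop)),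
    ← intervalIntegral.integral_div]
  exact intervalIntegral.integral_mono_on hab (hint (by fun_prop)) (hint (by fun_prop))
    fun α _ => hamgm α

lemma two_mul_abs_sub_le_of_quad_add_lin_eq {a b x₁ x₂ y₁ y₂ : ℤ} {η : ℝ} {N : ℕ}
    (ha : a ≠ 0) (hη : 0 ≤ η) (hx₁ : η * N < x₁) (hx₂ : η * N < x₂)
    (hy₁ : y₁ ∈ Icc 1 (N : ℤ)) (hy₂ : y₂ ∈ Icc 1 (N : ℤ))
    (h : a * x₁ ^ 2 + b * y₁ = a * x₂ ^ 2 + b * y₂) :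
    2 * η * |(x₁ - x₂ : ℝ)| ≤ |(b : ℝ)| := by
  rw [mem_Icc] at hy₁ hy₂
  have hN : (0 : ℝ) < N := by exact_mod_cast (show 0 < (N : ℤ) by omega)
  have hy : |(y₁ - y₂ : ℝ)| ≤ N := by
    rw [← Int.cast_sub, ← Int.cast_abs, ← Int.cast_natCast, Int.cast_le, abs_le]; omega
  have ha1 : (1 : ℝ) ≤ |(a : ℝ)| := by exact_mod_cast Int.one_le_abs ha
  have hsq : (a : ℝ) * (x₁ ^ 2 - x₂ ^ 2) = b * (y₂ - y₁) := by
    have := congrArg (Int.cast : ℤ → ℝ) h; push_cast at this; linarith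
  have hfactor : |(x₁ : ℝ) ^ 2 - x₂ ^ 2| = |(x₁ - x₂ : ℝ)| * (x₁ + x₂) := by
    rw [sq_sub_sq, abs_mul, abs_of_pos (by nlinarith : (0 : ℝ) < x₁ + x₂), mul_comm]
  have key : N * (2 * η * |(x₁ - x₂ : ℝ)|) ≤ N * |(b : ℝ)| :=
    calc N * (2 * η * |(x₁ - x₂ : ℝ)|) ≤ |(x₁ - x₂ : ℝ)| * (x₁ + x₂) := by
          nlinarith [abs_nonneg (x₁ - x₂ : ℝ)]
      _ ≤ |(a : ℝ)| * |(x₁ : ℝ) ^ 2 - x₂ ^ 2| := by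
          rw [← hfactor]; exact le_mul_of_one_le_left (abs_nonneg _) ha1
      _ = |(b : ℝ)| * |(y₁ - y₂ : ℝ)| := by
          rw [← abs_mul, hsq, abs_mul, abs_sub_comm (y₂ : ℝ)]
      _ ≤ N * |(b : ℝ)| := by rw [mul_comm]; gcongr
  exact le_of_mul_le_mul_left key hN

lemma card_Icc_neg_floor_floor_le {r : ℝ} (hr : 0 ≤ r) : (#(Icc (-⌊r⌋) ⌊r⌋) : ℝ) ≤ 2 * r + 1 := by
  have hfloor : (0 : ℤ) ≤ ⌊r⌋ := Int.floor_nonneg.2 hr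
  rw [Int.card_Icc, show (⌊r⌋ + 1 - -⌊r⌋).toNat = 2 * ⌊r⌋.toNat + 1 by omega]
  have hcast : ((⌊r⌋.toNat : ℕ) : ℝ) = ⌊r⌋ := by exact_mod_cast Int.toNat_of_nonneg hfloor
  push_cast
  rw [hcast]
  linarith [Int.floor_le r]

lemma card_collisions_quad_add_lin_le {a b : ℤ} (ha : a ≠ 0) (hb : b ≠ 0) {η : ℝ}
    (hη₀ : 0 < η) (hη₁ : η ≤ 1) (N : ℕ) :
    (#(collisions (Ioc ⌊η * N⌋ (N : ℤ) ×ˢ Icc 1 (N : ℤ)) fun p => a * p.1 ^ 2 + b * p.2) : ℝ) ≤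
      (|(b : ℝ)| + 1) * η⁻¹ * N ^ 2 := by
  set A := Ioc ⌊η * N⌋ (N : ℤ)
  set B := Icc 1 (N : ℤ)
  set K := ⌊|(b : ℝ)| / (2 * η)⌋
  have hmaps : Set.MapsTo (fun q : (ℤ × ℤ) × (ℤ × ℤ) => ((q.1.1, q.1.1 - q.2.1), q.1.2))
      (collisions (A ×ˢ B) fun p => a * p.1 ^ 2 + b * p.2)
      ((A ×ˢ Icc (-K) K) ×ˢ B : Finset ((ℤ × ℤ) × ℤ)) := by
    rintro ⟨⟨x₁, y₁⟩, ⟨x₂, y₂⟩⟩ hq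
    rw [mem_coe, collisions, mem_filter, mem_product, mem_product, mem_product] at hq
    obtain ⟨⟨⟨hx₁, hy₁⟩, hx₂, hy₂⟩, heq⟩ := hq
    have hdiff := two_mul_abs_sub_le_of_quad_add_lin_eq ha hη₀.le
      (Int.floor_lt.1 (mem_Ioc.1 hx₁).1) (Int.floor_lt.1 (mem_Ioc.1 hx₂).1) hy₁ hy₂ heq
    rw [← le_div_iff₀' (by positivity), ← Int.cast_sub, ← Int.cast_abs, ← Int.le_floor,
      abs_le] at hdiff
    simp only [coe_product, Set.mem_prod, mem_coe, mem_Icc]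
    exact ⟨⟨hx₁, hdiff⟩, hy₁⟩
  have hinj : Set.InjOn (fun q : (ℤ × ℤ) × (ℤ × ℤ) => ((q.1.1, q.1.1 - q.2.1), q.1.2))
      (collisions (A ×ˢ B) fun p => a * p.1 ^ 2 + b * p.2) := by
    rintro ⟨⟨x₁, y₁⟩, ⟨x₂, y₂⟩⟩ hq ⟨⟨x₁', y₁'⟩, ⟨x₂', y₂'⟩⟩ hq' himg
    rw [mem_coe, collisions, mem_filter] at hq hq'
    simp only [Prod.mk.injEq] at himg ⊢
    obtain ⟨⟨rfl, hx⟩, rfl⟩ := himg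
    obtain rfl : x₂ = x₂' := by omega
    -- `y₂` is recovered from the equation since `b ≠ 0`
    exact ⟨⟨rfl, rfl⟩, rfl, mul_left_cancel₀ hb (by linarith [hq.2, hq'.2])⟩
  have hA : (#A : ℝ) ≤ N := by
    have : (0 : ℤ) ≤ ⌊η * N⌋ := Int.floor_nonneg.2 (by positivity)
    exact_mod_cast (show #A ≤ N by rw [Int.card_Ioc]; omega)
  have hB : (#B : ℝ) = N := by simp [B]
  have hK : (#(Icc (-K) K) : ℝ) ≤ (|(b : ℝ)| + 1) * η⁻¹ := by
    refine (card_Icc_neg_floor_floor_le (by positivity)).trans ?_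
    rw [mul_div_assoc', mul_div_mul_left _ _ two_ne_zero, div_eq_mul_inv]
    nlinarith [one_le_inv_iff₀.2 ⟨hη₀, hη₁⟩]
  calc (#(collisions (A ×ˢ B) fun p => a * p.1 ^ 2 + b * p.2) : ℝ)
      ≤ #((A ×ˢ Icc (-K) K) ×ˢ B) := by exact_mod_cast card_le_card_of_injOn _ hmaps hinj
    _ = #A * #(Icc (-K) K) * #B := by simp only [card_product, Nat.cast_mul]
    _ ≤ N * ((|(b : ℝ)| + 1) * η⁻¹) * N := by rw [hB]; gcongr
    _ = (|(b : ℝ)| + 1) * η⁻¹ * N ^ 2 := by ring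

lemma integral_norm_quad_mul_lin_sq_le {a b : ℤ} (ha : a ≠ 0) (hb : b ≠ 0) {η : ℝ}
    (hη₀ : 0 < η) (hη₁ : η ≤ 1) (N : ℕ) {f g : ℤ → ℝ} (hf : ∀ x, |f x| ≤ 1)
    (hg : ∀ y, |g y| ≤ 1) :
    ∫ α in (0 : ℝ)..1, ‖expSum (Ioc ⌊η * N⌋ (N : ℤ)) f (fun x => a * x ^ 2) α *
        expSum (Icc 1 (N : ℤ)) g (fun y => b * y) α‖ ^ 2 ≤ (|(b : ℝ)| + 1) * η⁻¹ * N ^ 2 := by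
  simp_rw [expSum_mul_expSum]
  have hfg : ∀ p : ℤ × ℤ, |f p.1 * g p.2| ≤ 1 := fun p => by
    rw [abs_mul]; exact mul_le_one₀ (hf _) (abs_nonneg _) (hg _)
  exact (integral_norm_expSum_sq_le_card_collisions _ _ hfg).trans
    (card_collisions_quad_add_lin_le ha hb hη₀ hη₁ N)

/-- Mixed mean value estimate:
`∫_𝕋 |f̃(a₁α) f̃(a₂α) ĝ(b₁α) ĝ(b₂α)| dα ≪_{b₁,b₂} η⁻¹ N²`, where `f̃` is the quadratic
exponential sum of `f` over `(ηN, N] ∩ ℤ` and `ĝ` the linear exponential sum of `g` over `[N]`. -/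
theorem mixed_mean_value :
    ∀ b₁ b₂ : ℤ, b₁ ≠ 0 → b₂ ≠ 0 → ∃ C : ℝ, 0 < C ∧
      ∀ (a₁ a₂ : ℤ), a₁ ≠ 0 → a₂ ≠ 0 → ∀ (N : ℕ) (η : ℝ), η ∈ Set.Ioo (0 : ℝ) 1 →
        ∀ f g : ℤ → ℝ, (∀ x, |f x| ≤ 1) → (∀ x, |g x| ≤ 1) →
          (∫ α in (0 : ℝ)..1,
            ‖(∑ x ∈ Finset.Ioc ⌊η * N⌋ (N : ℤ), (f x : ℂ) *
                Complex.exp (2 * Real.pi * Complex.I * (((a₁ : ℝ) * α * (x : ℝ) ^ 2 : ℝ) : ℂ))) *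
              (∑ x ∈ Finset.Ioc ⌊η * N⌋ (N : ℤ), (f x : ℂ) *
                Complex.exp (2 * Real.pi * Complex.I * (((a₂ : ℝ) * α * (x : ℝ) ^ 2 : ℝ) : ℂ))) *
              (∑ y ∈ Finset.Icc 1 (N : ℤ), (g y : ℂ) *
                Complex.exp (2 * Real.pi * Complex.I * (((b₁ : ℝ) * α * (y : ℝ) : ℝ) : ℂ))) *
              (∑ y ∈ Finset.Icc 1 (N : ℤ), (g y : ℂ) *
                Complex.exp (2 * Real.pi * Complex.I * (((b₂ : ℝ) * α * (y : ℝ) : ℝ) : ℂ)))‖) ≤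
          C * η⁻¹ * (N : ℝ) ^ 2 := by
  intro b₁ b₂ hb₁ hb₂
  refine ⟨(|(b₁ : ℝ)| + |(b₂ : ℝ)| + 2) / 2, by positivity, ?_⟩
  intro a₁ a₂ ha₁ ha₂ N η ⟨hη₀, hη₁⟩ f g hf hg
  have hquad : ∀ (a : ℤ) (α : ℝ), ∑ x ∈ Ioc ⌊η * N⌋ (N : ℤ), (f x : ℂ) *
      Complex.exp (2 * π * I * ((a * α * (x : ℝ) ^ 2 : ℝ) : ℂ)) =
        expSum (Ioc ⌊η * N⌋ (N : ℤ)) f (fun x => a * x ^ 2) α := fun a α => by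
    simp only [expSum, expTwoPiI]; push_cast; ring_nf
  have hlin : ∀ (b : ℤ) (α : ℝ), ∑ y ∈ Icc 1 (N : ℤ), (g y : ℂ) *
      Complex.exp (2 * π * I * ((b * α * (y : ℝ) : ℝ) : ℂ)) =
        expSum (Icc 1 (N : ℤ)) g (fun y => b * y) α := fun b α => by
    simp only [expSum, expTwoPiI]; push_cast; ring_nf
  simp_rw [hquad, hlin, show ∀ s₁ s₂ t₁ t₂ : ℂ, s₁ * s₂ * t₁ * t₂ = s₁ * t₁ * (s₂ * t₂) from
    fun _ _ _ _ => by ring]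
  calc _ ≤ _ := integral_norm_mul_le_of_continuous (by fun_prop) (by fun_prop) zero_le_one
    _ ≤ ((|(b₁ : ℝ)| + 1) * η⁻¹ * N ^ 2 + (|(b₂ : ℝ)| + 1) * η⁻¹ * N ^ 2) / 2 := by
      gcongr
      · exact integral_norm_quad_mul_lin_sq_le ha₁ hb₁ hη₀ hη₁.le N hf hg
      · exact integral_norm_quad_mul_lin_sq_le ha₂ hb₂ hη₀ hη₁.le N hf hg
    _ = _ := by ring
end

section
/- Let N, η, a, b be given with a, b nonzero integers, N ≥ 1, η ∈ (0,1). The number of solutions to a(x₁² − x₂²) = b(y₁ − y₂) with x₁, x₂ integers in (ηN, N] and y₁, y₂ ∈ [N] is O_b(η^{−1} N²). -/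
/-!
Split the solutions according to `d = x₁ - x₂`. Each value of `d` is taken by at most `N²`
solutions: for `d = 0` the equation forces `y₁ = y₂`, so a solution is fixed by `(x₁, y₁)`;
for `d ≠ 0` it reads `a d (x₁ + x₂) = b (y₁ - y₂)`, so `(y₁, y₂)` fixes `x₁ + x₂` and hence the
solution. Since `x₁ + x₂ > 2ηN` and `|y₁ - y₂| < N`, also `|d| ≤ |b| / (2η)`, which leaves
at most `|b| η⁻¹ + 1` values of `d`.
-/

namespace MixedEquation

open Finset

def solutions (a b : ℤ) (X Y : Finset ℤ) : Finset ((ℤ × ℤ) × (ℤ × ℤ)) :=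
  ((X ×ˢ X) ×ˢ (Y ×ˢ Y)).filter (fun p => a * (p.1.1 ^ 2 - p.1.2 ^ 2) = b * (p.2.1 - p.2.2))

section Equation

variable {a b x₁ x₂ y₁ y₂ : ℤ}

theorem y_eq_of_x_eq (hb : b ≠ 0) (hx : x₁ = x₂)
    (h : a * (x₁ ^ 2 - x₂ ^ 2) = b * (y₁ - y₂)) : y₁ = y₂ := by
  subst hx
  simpa [hb, sub_eq_zero] using h.symm

theorem x_eq_of_sub_eq {x₁' x₂' : ℤ} (ha : a ≠ 0) (hne : x₁ - x₂ ≠ 0)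
    (hd : x₁ - x₂ = x₁' - x₂') (h : a * (x₁ ^ 2 - x₂ ^ 2) = b * (y₁ - y₂))
    (h' : a * (x₁' ^ 2 - x₂' ^ 2) = b * (y₁ - y₂)) : x₁ = x₁' ∧ x₂ = x₂' := by
  have hsum : x₁ + x₂ = x₁' + x₂' := by
    refine mul_left_cancel₀ (mul_ne_zero ha hne) ?_
    linear_combination h - h' - a * (x₁' + x₂') * hd
  omega

theorem abs_sub_mul_add_le (ha : a ≠ 0) (hx : 0 ≤ x₁ + x₂)
    (h : a * (x₁ ^ 2 - x₂ ^ 2) = b * (y₁ - y₂)) :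
    |x₁ - x₂| * (x₁ + x₂) ≤ |b| * |y₁ - y₂| := by
  calc |x₁ - x₂| * (x₁ + x₂) = |x₁ ^ 2 - x₂ ^ 2| := by
        rw [sq_sub_sq, abs_mul, abs_of_nonneg hx, mul_comm]
    _ ≤ |a| * |x₁ ^ 2 - x₂ ^ 2| := le_mul_of_one_le_left (abs_nonneg _) (Int.one_le_abs ha)
    _ = |b| * |y₁ - y₂| := by rw [← abs_mul, h, abs_mul]

theorem two_mul_mul_abs_sub_le (ha : a ≠ 0) {t : ℝ} (ht : 0 ≤ t) (hx₁ : t < x₁) (hx₂ : t < x₂)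
    (h : a * (x₁ ^ 2 - x₂ ^ 2) = b * (y₁ - y₂)) :
    2 * t * |(x₁ - x₂ : ℝ)| ≤ |(b : ℝ)| * |(y₁ - y₂ : ℝ)| := by
  have hsum : (0 : ℝ) ≤ x₁ + x₂ := by linarith
  have hreal : |(x₁ - x₂ : ℝ)| * (x₁ + x₂) ≤ |(b : ℝ)| * |(y₁ - y₂ : ℝ)| := by
    exact_mod_cast abs_sub_mul_add_le ha (by exact_mod_cast hsum) h
  calc 2 * t * |(x₁ - x₂ : ℝ)| ≤ |(x₁ - x₂ : ℝ)| * (x₁ + x₂) := by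
        nlinarith [abs_nonneg (x₁ - x₂ : ℝ)]
    _ ≤ _ := hreal

end Equation

theorem card_filter_sub_eq_le {a b : ℤ} (ha : a ≠ 0) (hb : b ≠ 0) {X Y : Finset ℤ}
    (hXY : #X ≤ #Y) (d : ℤ) :
    #{p ∈ solutions a b X Y | p.1.1 - p.1.2 = d} ≤ #Y ^ 2 := by
  simp only [solutions, filter_filter]
  rcases eq_or_ne d 0 with rfl | hd
  · calc _ ≤ #(X ×ˢ Y) := by
          refine card_le_card_of_injOn (fun p => (p.1.1, p.2.1)) ?_ ?_
          · intro p hp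
            simp only [coe_filter, mem_product, Set.mem_ofPred_eq] at hp
            simp [hp.1.1.1, hp.1.2.1]
          · rintro ⟨⟨x₁, x₂⟩, y₁, y₂⟩ hp ⟨⟨x₁', x₂'⟩, y₁', y₂'⟩ hq hpq
            simp only [coe_filter, mem_product, Set.mem_ofPred_eq] at hp hq
            simp only [Prod.mk.injEq] at hpq ⊢
            have hy := y_eq_of_x_eq hb (sub_eq_zero.mp hp.2.2) hp.2.1
            have hy' := y_eq_of_x_eq hb (sub_eq_zero.mp hq.2.2) hq.2.1
            omega
      _ ≤ #Y ^ 2 := by rw [card_product, sq]; exact Nat.mul_le_mul_right _ hXY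
  · calc _ ≤ #(Y ×ˢ Y) := by
          refine card_le_card_of_injOn Prod.snd ?_ ?_
          · intro p hp
            simp only [coe_filter, mem_product, Set.mem_ofPred_eq] at hp
            simp [hp.1.2.1, hp.1.2.2]
          · rintro ⟨⟨x₁, x₂⟩, y₁, y₂⟩ hp ⟨⟨x₁', x₂'⟩, y₁', y₂'⟩ hq hpq
            simp only [coe_filter, mem_product, Set.mem_ofPred_eq] at hp hq
            obtain ⟨rfl, rfl⟩ := Prod.mk.inj hpq
            obtain ⟨rfl, rfl⟩ :=
              x_eq_of_sub_eq ha (hp.2.2 ▸ hd) (hp.2.2.trans hq.2.2.symm) hp.2.1 hq.2.1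
            rfl
      _ = #Y ^ 2 := by rw [card_product, sq]

theorem mem_Icc_floor_of_abs_le {d : ℤ} {r : ℝ} (h : |(d : ℝ)| ≤ r) :
    d ∈ Icc (-⌊r⌋) ⌊r⌋ := by
  rw [abs_le] at h
  rw [mem_Icc, neg_le, Int.le_floor, Int.le_floor]
  push_cast
  constructor <;> linarith

theorem card_Icc_floor_le {r : ℝ} (hr : 0 ≤ r) : (#(Icc (-⌊r⌋) ⌊r⌋) : ℝ) ≤ 2 * r + 1 := by
  have hfl : 0 ≤ ⌊r⌋ := Int.floor_nonneg.mpr hr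
  have hcard : ((#(Icc (-⌊r⌋) ⌊r⌋) : ℕ) : ℤ) = 2 * ⌊r⌋ + 1 := by rw [Int.card_Icc]; omega
  calc (#(Icc (-⌊r⌋) ⌊r⌋) : ℝ) = ((2 * ⌊r⌋ + 1 : ℤ) : ℝ) := by rw [← hcard, Int.cast_natCast]
    _ ≤ 2 * r + 1 := by push_cast; linarith [Int.floor_le r]

theorem sub_mem_Icc_floor_of_mem_solutions {a b : ℤ} (ha : a ≠ 0) {N : ℕ} {η : ℝ}
    (hη : 0 < η) (hN : 1 ≤ N) {p : (ℤ × ℤ) × (ℤ × ℤ)}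
    (hp : p ∈ solutions a b (Ioc ⌊η * N⌋ N) (Icc 1 N)) :
    p.1.1 - p.1.2 ∈ Icc (-⌊|(b : ℝ)| / (2 * η)⌋) ⌊|(b : ℝ)| / (2 * η)⌋ := by
  simp only [solutions, mem_filter, mem_product, mem_Ioc, mem_Icc, Int.floor_lt] at hp
  obtain ⟨⟨⟨⟨hx₁, -⟩, hx₂, -⟩, hy₁, hy₂⟩, h⟩ := hp
  have hy : |(p.2.1 - p.2.2 : ℝ)| ≤ N := by
    exact_mod_cast (abs_sub_le_iff.mpr ⟨by omega, by omega⟩ : |p.2.1 - p.2.2| ≤ N)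
  have hdiff := two_mul_mul_abs_sub_le ha (by positivity) hx₁ hx₂ h
  have hN : (0 : ℝ) < N := by exact_mod_cast hN
  refine mem_Icc_floor_of_abs_le ?_
  rw [le_div_iff₀ (by positivity)]
  push_cast
  nlinarith [mul_le_mul_of_nonneg_left hy (abs_nonneg (b : ℝ))]

end MixedEquation

open MixedEquation Finset in
/-- The number of solutions to `a(x₁² − x₂²) = b(y₁ − y₂)` with `x₁, x₂ ∈ (ηN, N]` and
`y₁, y₂ ∈ [N]` is `O_b(η⁻¹ N²)`. -/
theorem mixed_equation_count :
    ∀ b : ℤ, b ≠ 0 → ∃ C : ℝ, 0 < C ∧ ∀ a : ℤ, a ≠ 0 → ∀ (N : ℕ) (η : ℝ),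
      1 ≤ N → η ∈ Set.Ioo (0 : ℝ) 1 →
      ((((Finset.Ioc ⌊η * N⌋ (N : ℤ) ×ˢ Finset.Ioc ⌊η * N⌋ (N : ℤ)) ×ˢ
          (Finset.Icc 1 (N : ℤ) ×ˢ Finset.Icc 1 (N : ℤ))).filter
            (fun p => a * (p.1.1 ^ 2 - p.1.2 ^ 2) = b * (p.2.1 - p.2.2))).card : ℝ) ≤
        C * η⁻¹ * (N : ℝ) ^ 2 := by
  intro b hb
  refine ⟨|b| + 1, by positivity, fun a ha N η hN ⟨hη0, hη1⟩ => ?_⟩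
  change (#(solutions a b (Ioc ⌊η * N⌋ N) (Icc 1 N)) : ℝ) ≤ _
  have hfl : 0 ≤ ⌊η * N⌋ := Int.floor_nonneg.mpr (by positivity)
  have hXY : #(Ioc ⌊η * N⌋ (N : ℤ)) ≤ #(Icc 1 (N : ℤ)) := by
    rw [Int.card_Ioc, Int.card_Icc]; omega
  have hY : #(Icc 1 (N : ℤ)) = N := by rw [Int.card_Icc]; omega
  have hcard := card_le_mul_card_image_of_maps_to
    (fun p hp => sub_mem_Icc_floor_of_mem_solutions ha hη0 hN hp) _
    (fun d _ => card_filter_sub_eq_le ha hb hXY d)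
  rw [hY] at hcard
  have hr := card_Icc_floor_le (r := |(b : ℝ)| / (2 * η)) (by positivity)
  calc (#(solutions a b (Ioc ⌊η * N⌋ N) (Icc 1 N)) : ℝ)
      ≤ N ^ 2 * #(Icc (-⌊|(b : ℝ)| / (2 * η)⌋) ⌊|(b : ℝ)| / (2 * η)⌋) := by exact_mod_cast hcard
    _ ≤ N ^ 2 * (2 * (|(b : ℝ)| / (2 * η)) + 1) := by gcongr
    _ = (|(b : ℝ)| + η) * η⁻¹ * N ^ 2 := by field_simp
    _ ≤ _ := by rw [Int.cast_abs]; gcongr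
end

section
/- If in every finite colouring of ℕ there is a monochromatic quadruple {x, y, x+y, xy}, then in every finite colouring of ℕ there is a monochromatic solution to x₁² − x₂² = y² + z. -/
/-- If Hindman's conjecture (monochromatic `{x, y, x+y, xy}` in every finite colouring
of ℕ) holds, then the equation `x₁² − x₂² = y² + z` is partition regular. -/
theorem hindman_implies_partition_regular
    (H : ∀ (r : ℕ) (c : ℕ → Fin (r + 1)), ∃ x y : ℕ, 0 < x ∧ 0 < y ∧
      c x = c y ∧ c (x + y) = c x ∧ c (x * y) = c x) :
    ∀ (r : ℕ) (c : ℕ → Fin (r + 1)), ∃ x₁ x₂ y z : ℕ, 0 < x₁ ∧ 0 < x₂ ∧ 0 < y ∧ 0 < z ∧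
      c x₁ = c x₂ ∧ c x₂ = c y ∧ c y = c z ∧ x₁ ^ 2 = x₂ ^ 2 + y ^ 2 + z := by
  intro r c
  set c' : ℕ → Fin (r + 1 + 1) := fun n =>
    if n % 2 = 1 then Fin.last (r + 1) else (c (n / 2)).castSucc with hc'
  obtain ⟨x, y, hx, hy, hxy, hsum, hprod⟩ := H (r + 1) c'
  -- x and y are both even
  have hxe : x % 2 = 0 := by
    by_contra h
    have hx1 : x % 2 = 1 := by omega
    have hy1 : y % 2 = 1 := by
      by_contra h2
      have hy0 : y % 2 = 0 := by omega
      have : c' x = c' y := hxy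
      simp [hc', hx1, hy0] at this
      exact (Fin.castSucc_lt_last _).ne this.symm
    have hs0 : (x + y) % 2 = 0 := by omega
    have : c' (x + y) = c' x := hsum
    simp [hc', hx1, hs0] at this
  have hye : y % 2 = 0 := by
    by_contra h
    have hy1 : y % 2 = 1 := by omega
    have : c' x = c' y := hxy
    simp [hc', hxe, hy1] at this
  obtain ⟨a, rfl⟩ : ∃ a, x = 2 * a := ⟨x / 2, by omega⟩
  obtain ⟨b, rfl⟩ : ∃ b, y = 2 * b := ⟨y / 2, by omega⟩
  have ha : 0 < a := by omega
  have hb : 0 < b := by omega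
  have key : ∀ m n : ℕ, c' (2 * m) = c' (2 * n) → c m = c n := by
    intro m n h
    simp [hc', Nat.mul_mod_right, Nat.mul_div_cancel_left _ (by norm_num : 0 < 2)] at h
    exact h
  have h1 : c (a + b) = c a := by
    apply key
    have : (2 * a + 2 * b) = 2 * (a + b) := by ring
    rw [← this]; exact hsum
  have h2 : c a = c b := key _ _ hxy
  have h3 : c (2 * (a * b)) = c a := by
    apply key
    have : (2 * a) * (2 * b) = 2 * (2 * (a * b)) := by ring
    rw [← this]; exact hprod
  refine ⟨a + b, a, b, 2 * (a * b), by omega, ha, hb, by positivity, h1, h2,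
    h2.symm.trans h3.symm, by ring⟩
end

section
/- Let W be an even positive integer, ξ ∈ [W], and a, q coprime positive integers. If gcd(ξ, W) = 1, then |(1/q) Σ_{r=1}^{q} e((a((W/2)r² + ξr))/q)| is 0 when gcd(q, W/2) > 1, and is O(q^{−1/2}) when gcd(q, W/2) = 1. -/
/-!
Since the summand is `q`-periodic in `r`, the sum is `S = ∑_{x ∈ ℤ/q} ψ(A x² + B x)` with `ψ`
the standard additive character of `ℤ/q`, `A = a W/2` and `B = a ξ`.

If `d = gcd(q, W/2) > 1`, put `t = q/d`. Then `A t = 0` in `ℤ/q`, so translating `x` by `t`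
multiplies `S` by `ψ(B t)`, and `ψ(B t) ≠ 1` because `d` is prime to `a ξ`. Hence `S = 0`.

If `gcd(q, W/2) = 1`, `A` is a unit. Weyl differencing gives
`|S|² = ∑_h ψ(A h² + B h) ∑_y ψ(2 A h y)`, where the inner sum is `q` or `0` according to
whether `2h = 0`. In the cyclic group `ℤ/q` this has at most two solutions, so `|S|² ≤ 2q`.
-/

open Finset

lemma Fintype.sum_eq_zero_of_forall_add_eq_mul {G M : Type*} [AddCommGroup G] [Fintype G]
    [Ring M] [NoZeroDivisors M] {F : G → M} {t : G} {c : M} (hc : c ≠ 1)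
    (hF : ∀ x, F (x + t) = c * F x) : ∑ x, F x = 0 := by
  have hS : ∑ x, F x = c * ∑ x, F x := by
    rw [mul_sum, ← Equiv.sum_comp (Equiv.addRight t) F]
    exact Finset.sum_congr rfl fun x _ => hF x
  have : (c - 1) * ∑ x, F x = 0 := by rw [sub_mul, ← hS, one_mul, sub_self]
  exact (mul_eq_zero.mp this).resolve_left (sub_ne_zero.mpr hc)

namespace AddChar

variable {R : Type*} [CommRing R] [Fintype R]

lemma sum_quadratic_eq_zero {M : Type*} [CommRing M] [IsDomain M] (ψ : AddChar R M)
    {A B t : R} (hAt : A * t = 0) (hBt : ψ (B * t) ≠ 1) :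
    ∑ x, ψ (A * x ^ 2 + B * x) = 0 := by
  refine Fintype.sum_eq_zero_of_forall_add_eq_mul (t := t) hBt fun x => ?_
  rw [← map_add_eq_mul]
  congr 1
  linear_combination (2 * x + t) * hAt

lemma sq_norm_sum_eq_sum_sum_sub {G : Type*} [AddCommGroup G] [Fintype G]
    (ψ : AddChar G ℂ) (f : G → G) :
    ((‖∑ x, ψ (f x)‖ ^ 2 : ℝ) : ℂ) = ∑ h, ∑ y, ψ (f (y + h) - f y) := by
  rw [Complex.ofReal_pow, ← Complex.mul_conj', map_sum, sum_mul_sum, sum_comm]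
  refine Eq.trans ?_ sum_comm
  refine sum_congr rfl fun y _ => ?_
  rw [← Equiv.sum_comp (Equiv.addLeft y)]
  refine sum_congr rfl fun h _ => ?_
  rw [← map_neg_eq_conj, ← map_add_eq_mul, sub_eq_add_neg]
  rfl

lemma sq_norm_sum_quadratic_le [DecidableEq R] {ψ : AddChar R ℂ} (hψ : ψ.IsPrimitive)
    (A B : R) :
    ‖∑ x, ψ (A * x ^ 2 + B * x)‖ ^ 2 ≤ Fintype.card R * #{h | 2 * A * h = 0} := by
  have hinner : ∀ h, ∑ y, ψ ((A * (y + h) ^ 2 + B * (y + h)) - (A * y ^ 2 + B * y)) =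
      ((if 2 * A * h = 0 then Fintype.card R else 0 : ℕ) : ℂ) * ψ (A * h ^ 2 + B * h) := by
    intro h
    rw [← sum_mulShift _ hψ, sum_mul]
    refine sum_congr rfl fun y _ => ?_
    rw [← map_add_eq_mul]
    congr 1
    ring
  have hweyl := sq_norm_sum_eq_sum_sum_sub ψ (fun x => A * x ^ 2 + B * x)
  simp only [hinner] at hweyl
  calc ‖∑ x, ψ (A * x ^ 2 + B * x)‖ ^ 2
      = ‖∑ h, ((if 2 * A * h = 0 then Fintype.card R else 0 : ℕ) : ℂ) *
          ψ (A * h ^ 2 + B * h)‖ := by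
        rw [← hweyl, Complex.norm_real, Real.norm_of_nonneg (by positivity)]
    _ ≤ ∑ h, ‖((if 2 * A * h = 0 then Fintype.card R else 0 : ℕ) : ℂ) *
          ψ (A * h ^ 2 + B * h)‖ :=
        norm_sum_le _ _
    _ = Fintype.card R * #{h | 2 * A * h = 0} := by
        simp only [norm_mul, norm_apply, mul_one, Complex.norm_natCast]
        push_cast
        rw [sum_ite, sum_const, sum_const_zero, add_zero, nsmul_eq_mul, mul_comm]

end AddChar

namespace ZMod

variable {N : ℕ} [NeZero N]

lemma sum_Icc_intCast_eq_sum {M : Type*} [AddCommMonoid M] (g : ZMod N → M) :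
    ∑ r ∈ Icc (1 : ℤ) N, g r = ∑ x, g x := by
  have hinj : Set.InjOn (fun r : ℤ => (r : ZMod N)) (Icc (1 : ℤ) N) := by
    intro r hr s hs hrs
    simp only [coe_Icc, Set.mem_Icc] at hr hs
    obtain ⟨k, hk⟩ := (intCast_eq_intCast_iff_dvd_sub r s N).mp hrs
    have : k = 0 := by nlinarith
    rw [this, mul_zero] at hk
    omega
  have himage : (Icc (1 : ℤ) N).image (fun r : ℤ => (r : ZMod N)) = univ :=
    eq_univ_of_card _ (by rw [card_image_of_injOn hinj, Int.card_Icc, card]; omega)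
  rw [← sum_image hinj, himage]

lemma card_filter_two_mul_mul_eq_zero_le {A : ZMod N} (hA : IsUnit A) :
    #{h : ZMod N | 2 * A * h = 0} ≤ 2 := by
  have : ∀ h : ZMod N, 2 * A * h = 0 ↔ 2 • h = 0 := fun h => by
    rw [mul_comm 2 A, mul_assoc, hA.mul_right_eq_zero, two_nsmul, two_mul]
  simp only [this]
  exact IsAddCyclic.card_nsmul_eq_zero_le two_pos

lemma sq_norm_sum_stdAddChar_quadratic_le {A : ZMod N} (hA : IsUnit A) (B : ZMod N) :
    ‖∑ x, stdAddChar (A * x ^ 2 + B * x)‖ ^ 2 ≤ 2 * N := by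
  classical
  calc ‖∑ x, stdAddChar (A * x ^ 2 + B * x)‖ ^ 2
      ≤ N * #{h : ZMod N | 2 * A * h = 0} := by
        simpa using AddChar.sq_norm_sum_quadratic_le (isPrimitive_stdAddChar N) A B
    _ ≤ N * 2 := by gcongr; exact_mod_cast card_filter_two_mul_mul_eq_zero_le hA
    _ = 2 * N := mul_comm _ _

lemma norm_average_stdAddChar_quadratic_le {A : ZMod N} (hA : IsUnit A) (B : ZMod N) :
    ‖(1 / N : ℂ) * ∑ x, stdAddChar (A * x ^ 2 + B * x)‖ ≤ √2 / √N := by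
  calc ‖(1 / N : ℂ) * ∑ x, stdAddChar (A * x ^ 2 + B * x)‖
      = ‖∑ x, stdAddChar (A * x ^ 2 + B * x)‖ / N := by
        rw [norm_mul, norm_div, norm_one, Complex.norm_natCast, one_div_mul_eq_div]
    _ ≤ √(2 * N) / N := by
        gcongr; exact Real.le_sqrt_of_sq_le (sq_norm_sum_stdAddChar_quadratic_le hA B)
    _ = √2 / √N := by
        rw [Real.sqrt_mul zero_le_two, mul_div_assoc, Real.sqrt_div_self']
        ring

lemma sum_stdAddChar_quadratic_eq_zero {d : ℕ} (hd : 1 < d) (hdN : d ∣ N) {A B : ℤ}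
    (hdA : (d : ℤ) ∣ A) (hB : IsCoprime (d : ℤ) B) :
    ∑ x : ZMod N, stdAddChar ((A : ZMod N) * x ^ 2 + (B : ZMod N) * x) = 0 := by
  obtain ⟨t, rfl⟩ := hdN
  obtain ⟨k, rfl⟩ := hdA
  have ht : t ≠ 0 := by rintro rfl; exact NeZero.ne (d * 0) (mul_zero d)
  refine AddChar.sum_quadratic_eq_zero stdAddChar (t := (t : ZMod (d * t))) ?_ ?_
  · push_cast
    rw [mul_comm (d : ZMod (d * t)), mul_assoc, ← Nat.cast_mul, natCast_self, mul_zero]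
  · rw [← (stdAddChar (N := d * t)).map_zero_eq_one, injective_stdAddChar.ne_iff,
      ← Int.cast_natCast, ← Int.cast_mul, Ne, intCast_zmod_eq_zero_iff_dvd]
    intro hdvd
    push_cast at hdvd
    have hdB : (d : ℤ) ∣ B := (mul_dvd_mul_iff_right (Int.natCast_ne_zero.mpr ht)).mp hdvd
    have := Int.natAbs_of_isUnit (hB.isUnit_of_dvd' dvd_rfl hdB)
    omega

lemma cexp_intCast_div_eq_stdAddChar (n : ℤ) :
    Complex.exp (2 * Real.pi * Complex.I * ((n : ℝ) / ((N : ℤ) : ℝ))) =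
      stdAddChar (n : ZMod N) := by
  rw [stdAddChar_coe]
  push_cast
  ring_nf

lemma sum_Icc_cexp_quadratic_eq_sum_stdAddChar (A B : ℤ) :
    ∑ r ∈ Icc 1 (N : ℤ), Complex.exp (2 * Real.pi * Complex.I *
      (((A * r ^ 2 + B * r : ℤ) : ℝ) / ((N : ℤ) : ℝ))) =
      ∑ x : ZMod N, stdAddChar ((A : ZMod N) * x ^ 2 + (B : ZMod N) * x) := by
  rw [← sum_Icc_intCast_eq_sum]
  refine sum_congr rfl fun r _ => ?_
  rw [cexp_intCast_div_eq_stdAddChar]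
  push_cast
  rfl

end ZMod

/-- Local Weyl sum estimate: for `W` even, `gcd(ξ, W) = 1` and `gcd(a, q) = 1`, the
average over `r ∈ [q]` of `e(a((W/2)r² + ξr)/q)` vanishes when `gcd(q, W/2) > 1`, and is
`O(q^{-1/2})` when `gcd(q, W/2) = 1`. -/
theorem local_weyl_estimate :
    ∃ C : ℝ, 0 < C ∧ ∀ (W ξ a q : ℤ), 0 < W → 2 ∣ W → 1 ≤ ξ → ξ ≤ W →
      Int.gcd ξ W = 1 → 0 < a → 0 < q → Int.gcd a q = 1 →
      (1 < Int.gcd q (W / 2) →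
        ‖(1 / (q : ℂ)) * ∑ r ∈ Finset.Icc 1 q,
            Complex.exp (2 * Real.pi * Complex.I *
              (((a * ((W / 2) * r ^ 2 + ξ * r) : ℤ) : ℝ) / (q : ℝ)))‖ = 0) ∧
      (Int.gcd q (W / 2) = 1 →
        ‖(1 / (q : ℂ)) * ∑ r ∈ Finset.Icc 1 q,
            Complex.exp (2 * Real.pi * Complex.I *
              (((a * ((W / 2) * r ^ 2 + ξ * r) : ℤ) : ℝ) / (q : ℝ)))‖ ≤
          C / Real.sqrt (q : ℝ)) := by
  refine ⟨√2, by positivity, fun W ξ a q _ hW _ _ hξW _ hq haq => ?_⟩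
  obtain ⟨M, rfl⟩ := hW
  lift q to ℕ using hq.le
  have : NeZero q := ⟨by omega⟩
  simp_rw [Int.mul_ediv_cancel_left M two_ne_zero, mul_add, ← mul_assoc,
    ZMod.sum_Icc_cexp_quadratic_eq_sum_stdAddChar]
  have haq : IsCoprime a q := Int.isCoprime_iff_gcd_eq_one.mpr haq
  refine ⟨fun hd => ?_, fun hqM => ?_⟩
  · have hdq : (Int.gcd q M : ℤ) ∣ q := Int.gcd_dvd_left q M
    have hdM : (Int.gcd q M : ℤ) ∣ M := Int.gcd_dvd_right q M
    have hξ : IsCoprime ξ (2 * M) := Int.isCoprime_iff_gcd_eq_one.mpr hξW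
    have hdaξ : IsCoprime (Int.gcd q M : ℤ) (a * ξ) :=
      (haq.symm.of_isCoprime_of_dvd_left hdq).mul_right
        (hξ.symm.of_isCoprime_of_dvd_left (hdM.mul_left 2))
    rw [ZMod.sum_stdAddChar_quadratic_eq_zero hd (Int.natCast_dvd_natCast.mp hdq)
      (hdM.mul_left a) hdaξ, mul_zero, norm_zero]
  · have hA : IsUnit ((a * M : ℤ) : ZMod q) := (ZMod.coe_int_isUnit_iff_isCoprime _ _).mpr
      (haq.symm.mul_right (Int.isCoprime_iff_gcd_eq_one.mpr hqM))
    simpa only [Int.cast_natCast] using ZMod.norm_average_stdAddChar_quadratic_le hA _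
end
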